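/- $\tilde A$ is dense in $A^*$ if and only if for every finite-dimensional $A$-comodule $(V,\rho)$, the image of the algebra homomorphism $\pi_V : A^* \to \mathrm{End}_K(V)$ coincides with $\pi_V(\tilde A)$. -/

import Mathlib

open TensorProduct

noncomputable section

variable {K : Type} [Field K] {A : Type} [CommRing A] [HopfAlgebra K A]

/-- Convolution product on the dual of a coalgebra:
`(w * w') a = ∑ w a₍₁₎ * w' a₍₂₎`. -/
def conv (w w' : Module.Dual K A) : Module.Dual K A :=
  (LinearMap.mul' K K).comp ((TensorProduct.map w w').comp (Coalgebra.comul (R := K)))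

/-- Left convolution by `u`, as a linear endomorphism of the dual. -/
def convL (u : Module.Dual K A) : Module.Dual K A →ₗ[K] Module.Dual K A where
  toFun := conv u
  map_add' x y := by
    unfold conv
    rw [TensorProduct.map_add_right, LinearMap.add_comp, LinearMap.comp_add]
  map_smul' c x := by
    show (LinearMap.mul' K K).comp ((TensorProduct.map u (c • x)).comp (Coalgebra.comul (R := K))) =
      c • (LinearMap.mul' K K).comp ((TensorProduct.map u x).comp (Coalgebra.comul (R := K)))
    rw [TensorProduct.map_smul_right, LinearMap.smul_comp, LinearMap.comp_smul]

/-- The span of `{u * w' : w' ∈ A*}`. -/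
def rightOrbit (u : Module.Dual K A) : Submodule K (Module.Dual K A) :=
  Submodule.span K {x | ∃ w', x = conv u w'}

lemma rightOrbit_mapsTo (u : Module.Dual K A) :
    ∀ x ∈ rightOrbit u, convL u x ∈ rightOrbit u := by
  intro x hx
  have h : Submodule.map (convL u) (rightOrbit u) ≤ rightOrbit u := by
    rw [rightOrbit, Submodule.map_span]
    apply Submodule.span_mono
    rintro y ⟨x, ⟨w', rfl⟩, rfl⟩
    exact ⟨conv u w', rfl⟩
  exact h ⟨x, hx, rfl⟩

/-- The trace of the finite-rank operator "left convolution by `u`", computed as the trace of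
its restriction to the finite-dimensional invariant subspace `u * A*` containing its image. -/
def convTrace (u : Module.Dual K A) : K :=
  LinearMap.trace K (rightOrbit u) ((convL u).restrict (rightOrbit_mapsTo u))

/-- The span of `{w₁ * w * w₂ : w₁, w₂ ∈ A*}`. -/
def twoSidedOrbit (w : Module.Dual K A) : Submodule K (Module.Dual K A) :=
  Submodule.span K {x | ∃ w₁ w₂, x = conv w₁ (conv w w₂)}

/-- `Ã = {w ∈ A* : dim_K (A* * w * A*) < ∞}`. -/
def tildeSet (K : Type) [Field K] (A : Type) [CommRing A] [HopfAlgebra K A] :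
    Set (Module.Dual K A) :=
  {w | FiniteDimensional K (twoSidedOrbit w)}

/-- A normalized invariant integral on `G = Spec A`:  `w_G(1) = 1` and
`w * w_G = w(1) w_G = w_G * w` for all `w ∈ A*`. -/
def IsNormalizedIntegral (wG : Module.Dual K A) : Prop :=
  wG 1 = 1 ∧ ∀ w : Module.Dual K A, conv w wG = w 1 • wG ∧ conv wG w = w 1 • wG
/-- `Ã` is dense in `A*` (for the weak linear topology): the only `a ∈ A` annihilated by all
of `Ã` is `0`. -/
def TildeDense (K : Type) [Field K] (A : Type) [CommRing A] [HopfAlgebra K A] : Prop :=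
  ∀ a : A, (∀ u ∈ tildeSet K A, u a = 0) → a = 0

/-- `(V, ρ)` is an `A`-comodule: coassociativity and counit axioms. -/
def IsComodule {V : Type} [AddCommGroup V] [Module K V] (ρ : V →ₗ[K] V ⊗[K] A) : Prop :=
  ((TensorProduct.assoc K V A A).toLinearMap.comp ((ρ.rTensor A).comp ρ) =
      (LinearMap.lTensor V (Coalgebra.comul (R := K))).comp ρ) ∧
  ((TensorProduct.rid K V).toLinearMap.comp
      ((LinearMap.lTensor V (Coalgebra.counit (R := K))).comp ρ) = LinearMap.id)

/-- The action of `w ∈ A*` on an `A`-comodule `(V, ρ)`: `w ⋅ v = (id ⊗ w)(ρ v)`.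
As a map `π_V : A* → End_K(V)` it is a unital algebra homomorphism. -/
def coact {V : Type} [AddCommGroup V] [Module K V] (ρ : V →ₗ[K] V ⊗[K] A)
    (w : Module.Dual K A) : V →ₗ[K] V :=
  (TensorProduct.rid K V).toLinearMap.comp ((LinearMap.lTensor V w).comp ρ)

/-!
If `Ã` is dense, the action of `A*` on a finite-dimensional comodule `V` only sees the
restriction of a functional to the finite-dimensional span of the matrix coefficients of `V`, and a
subspace of `A*` with trivial annihilator in `A` restricts onto the whole dual of any
finite-dimensional subspace of `A`. Conversely, `a ∈ A` lies in the finite-dimensional subcomodule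
of `A` spanned by the first legs of `Δ a`; if `u ∈ Ã` acts there as the identity, then
`w a = (w * u) a` for every `w ∈ A*`, and `w * u ∈ Ã` because `Ã` is a left ideal.
-/

lemma rTensor_lTensor_comm_apply {M N P Q : Type} [AddCommGroup M] [Module K M] [AddCommGroup N]
    [Module K N] [AddCommGroup P] [Module K P] [AddCommGroup Q] [Module K Q]
    (f : M →ₗ[K] P) (g : N →ₗ[K] Q) (x : M ⊗[K] N) :
    f.rTensor Q (g.lTensor M x) = g.lTensor P (f.rTensor N x) := by
  rw [← LinearMap.comp_apply, ← LinearMap.comp_apply, LinearMap.rTensor_comp_lTensor,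
    LinearMap.lTensor_comp_rTensor]

section Legs

variable {M N : Type} [AddCommGroup M] [Module K M] [AddCommGroup N] [Module K N]

def legMap (T : M ⊗[K] N) : Module.Dual K N →ₗ[K] M :=
  (TensorProduct.rid K M).toLinearMap ∘ₗ (LinearMap.lTensorHom M).flip T

lemma legMap_apply (T : M ⊗[K] N) (f : Module.Dual K N) :
    legMap T f = TensorProduct.rid K M (f.lTensor M T) := rfl

@[simp]
lemma legMap_tmul (m : M) (n : N) (f : Module.Dual K N) : legMap (m ⊗ₜ[K] n) f = f n • m := by
  simp [legMap_apply]

lemma legMap_rTensor {P : Type} [AddCommGroup P] [Module K P] (g : M →ₗ[K] P) (T : M ⊗[K] N)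
    (f : Module.Dual K N) : legMap (g.rTensor N T) f = g (legMap T f) := by
  induction T with
  | zero => simp [legMap_apply]
  | tmul m n => simp
  | add x y hx hy => simp_all [legMap_apply]

lemma eq_zero_of_forall_legMap_eq_zero {T : M ⊗[K] N} (h : ∀ f, legMap T f = 0) : T = 0 := by
  classical
  let b := Module.Free.chooseBasis K N
  apply (TensorProduct.equivFinsuppOfBasisRight b).injective
  ext i
  simpa [TensorProduct.equivFinsuppOfBasisRight_apply, legMap_apply] using h (b.coord i)

def legSpan (T : M ⊗[K] N) : Submodule K M := LinearMap.range (legMap T)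

instance (T : M ⊗[K] N) : FiniteDimensional K (legSpan T) := by
  induction T with
  | zero =>
    refine Submodule.finiteDimensional_of_le (S₂ := ⊥) ?_
    rintro _ ⟨f, rfl⟩
    simp [legMap_apply]
  | tmul m n =>
    refine Submodule.finiteDimensional_of_le (S₂ := K ∙ m) ?_
    rintro _ ⟨f, rfl⟩
    simpa using Submodule.smul_mem _ (f n) (Submodule.mem_span_singleton_self m)
  | add x y hx hy =>
    refine Submodule.finiteDimensional_of_le (S₂ := legSpan x ⊔ legSpan y) ?_
    rintro _ ⟨f, rfl⟩
    rw [legMap_apply, map_add, map_add]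
    exact Submodule.add_mem_sup ⟨f, rfl⟩ ⟨f, rfl⟩

lemma mem_range_rTensor_legSpan (T : M ⊗[K] N) :
    T ∈ LinearMap.range ((legSpan T).subtype.rTensor N) := by
  have hexact := rTensor_exact N (LinearMap.exact_subtype_mkQ (legSpan T))
    (Submodule.mkQ_surjective _)
  refine (hexact _).1 (eq_zero_of_forall_legMap_eq_zero fun f => ?_)
  rw [legMap_rTensor, Submodule.mkQ_apply, Submodule.Quotient.mk_eq_zero]
  exact ⟨f, rfl⟩

end Legs

lemma coact_apply {M : Type} [AddCommGroup M] [Module K M] (ρ : M →ₗ[K] M ⊗[K] A)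
    (w : Module.Dual K A) (m : M) : coact ρ w m = legMap (ρ m) w := rfl

section Comodule

variable {M : Type} [AddCommGroup M] [Module K M] {ρ : M →ₗ[K] M ⊗[K] A}

lemma isComodule_comul : IsComodule (Coalgebra.comul (R := K) (A := A)) := by
  refine ⟨Coalgebra.coassoc, LinearMap.ext fun a => ?_⟩
  simp

lemma self_mem_legSpan_coaction (hρ : IsComodule ρ) (m : M) : m ∈ legSpan (ρ m) :=
  ⟨Coalgebra.counit, LinearMap.congr_fun hρ.2 m⟩

lemma rTensor_coaction_coaction (hρ : IsComodule ρ) (m : M) :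
    ρ.rTensor A (ρ m) = (TensorProduct.assoc K M A A).symm
      ((Coalgebra.comul (R := K)).lTensor M (ρ m)) := by
  rw [LinearEquiv.eq_symm_apply]
  exact LinearMap.congr_fun hρ.1 m

lemma rTensor_assoc_symm {N P : Type} [AddCommGroup N] [Module K N] [AddCommGroup P] [Module K P]
    (g : N →ₗ[K] P) (x : N ⊗[K] (A ⊗[K] A)) :
    (g.rTensor A).rTensor A ((TensorProduct.assoc K N A A).symm x) =
      (TensorProduct.assoc K P A A).symm (g.rTensor (A ⊗[K] A) x) := by
  simp [LinearMap.rTensor_tensor]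

lemma coaction_mem_range_rTensor_legSpan (hρ : IsComodule ρ) (m : M) :
    ∀ x ∈ legSpan (ρ m), ρ x ∈ LinearMap.range ((legSpan (ρ m)).subtype.rTensor A) := by
  rintro _ ⟨f, rfl⟩
  -- By coassociativity `ρ ((id ⊗ f) (ρ m)) = (id ⊗ id ⊗ f) ((id ⊗ Δ) (ρ m))`, whose first legs
  -- are those of `ρ m`.
  obtain ⟨t, ht⟩ := mem_range_rTensor_legSpan (ρ m)
  refine ⟨legMap ((TensorProduct.assoc K _ A A).symm
    ((Coalgebra.comul (R := K)).lTensor _ t)) f, ?_⟩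
  rw [← legMap_rTensor, ← legMap_rTensor, rTensor_coaction_coaction hρ, rTensor_assoc_symm]
  conv_rhs => rw [← ht]
  rw [rTensor_lTensor_comm_apply]

end Comodule

section Restrict

variable {M : Type} [AddCommGroup M] [Module K M] (ρ : M →ₗ[K] M ⊗[K] A)
  (N : Submodule K M) (hN : ∀ x ∈ N, ρ x ∈ LinearMap.range (N.subtype.rTensor A))

lemma rTensor_subtype_injective (P : Type) [AddCommGroup P] [Module K P] :
    Function.Injective (N.subtype.rTensor P) :=
  Module.Flat.rTensor_preserves_injective_linearMap _ N.injective_subtype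

def coactionRestrict : N →ₗ[K] N ⊗[K] A :=
  (LinearEquiv.ofInjective _ (rTensor_subtype_injective N A)).symm.toLinearMap ∘ₗ
    (ρ ∘ₗ N.subtype).codRestrict _ fun x => hN x x.2

lemma rTensor_subtype_coactionRestrict (x : N) :
    N.subtype.rTensor A (coactionRestrict ρ N hN x) = ρ x :=
  LinearEquiv.ofInjective_symm_apply (h := rTensor_subtype_injective N A) _ ⟨_, hN x x.2⟩

lemma subtype_coact_coactionRestrict (w : Module.Dual K A) (x : N) :
    (coact (coactionRestrict ρ N hN) w x : M) = coact ρ w x := by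
  rw [coact_apply, coact_apply, ← rTensor_subtype_coactionRestrict ρ N hN, legMap_rTensor]
  rfl

variable {ρ} in
lemma isComodule_coactionRestrict (hρ : IsComodule ρ) :
    IsComodule (coactionRestrict ρ N hN) := by
  set ρN := coactionRestrict ρ N hN
  have hρN : N.subtype.rTensor A ∘ₗ ρN = ρ ∘ₗ N.subtype :=
    LinearMap.ext (rTensor_subtype_coactionRestrict ρ N hN)
  constructor
  · refine LinearMap.ext fun x => rTensor_subtype_injective N (A ⊗[K] A) ?_
    calc N.subtype.rTensor (A ⊗[K] A) (TensorProduct.assoc K N A A (ρN.rTensor A (ρN x)))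
        = TensorProduct.assoc K M A A ((N.subtype.rTensor A ∘ₗ ρN).rTensor A (ρN x)) := by
          simp [LinearMap.rTensor_tensor, LinearMap.rTensor_comp]
      _ = TensorProduct.assoc K M A A (ρ.rTensor A (N.subtype.rTensor A (ρN x))) := by
          rw [hρN, LinearMap.rTensor_comp_apply]
      _ = (Coalgebra.comul (R := K)).lTensor M (N.subtype.rTensor A (ρN x)) := by
          rw [rTensor_subtype_coactionRestrict]
          exact LinearMap.congr_fun hρ.1 x
      _ = N.subtype.rTensor (A ⊗[K] A) ((Coalgebra.comul (R := K)).lTensor N (ρN x)) :=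
          (rTensor_lTensor_comm_apply _ _ _).symm
  · exact LinearMap.ext fun x => Subtype.ext <|
      (subtype_coact_coactionRestrict ρ N hN _ x).trans (LinearMap.congr_fun hρ.2 x)

end Restrict

open WithConv in
lemma conv_eq_ofConv_mul (w w' : Module.Dual K A) : conv w w' = (toConv w * toConv w').ofConv :=
  rfl

open WithConv in
lemma conv_conv_eq_ofConv_mul (w₁ w w₂ : Module.Dual K A) :
    conv w₁ (conv w w₂) = (toConv w₁ * toConv w * toConv w₂).ofConv := by
  rw [mul_assoc]
  rfl

lemma conv_assoc (w u w' : Module.Dual K A) : conv (conv w u) w' = conv w (conv u w') := by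
  rw [conv_eq_ofConv_mul (conv w u), conv_eq_ofConv_mul, WithConv.toConv_ofConv,
    conv_conv_eq_ofConv_mul]

lemma conv_apply_eq_apply_coact (w u : Module.Dual K A) (a : A) :
    conv w u a = w (coact (Coalgebra.comul (R := K)) u a) := by
  rw [coact_apply]
  change LinearMap.mul' K K (TensorProduct.map w u _) = _
  induction Coalgebra.comul (R := K) a with
  | zero => simp [legMap_apply]
  | tmul x y => simp [mul_comm]
  | add x y hx hy => simp_all [legMap_apply]

lemma twoSidedOrbit_zero : twoSidedOrbit (0 : Module.Dual K A) = ⊥ := by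
  refine eq_bot_iff.2 (Submodule.span_le.2 ?_)
  rintro _ ⟨w₁, w₂, rfl⟩
  simp [conv_conv_eq_ofConv_mul]

lemma twoSidedOrbit_add_le (w w' : Module.Dual K A) :
    twoSidedOrbit (w + w') ≤ twoSidedOrbit w ⊔ twoSidedOrbit w' := by
  refine Submodule.span_le.2 ?_
  rintro _ ⟨w₁, w₂, rfl⟩
  have hsplit :
      conv w₁ (conv (w + w') w₂) = conv w₁ (conv w w₂) + conv w₁ (conv w' w₂) := by
    simp only [conv_conv_eq_ofConv_mul, WithConv.toConv_add, mul_add, add_mul,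
      WithConv.ofConv_add]
  rw [hsplit]
  exact Submodule.add_mem_sup (Submodule.subset_span ⟨w₁, w₂, rfl⟩)
    (Submodule.subset_span ⟨w₁, w₂, rfl⟩)

lemma twoSidedOrbit_smul_le (c : K) (w : Module.Dual K A) :
    twoSidedOrbit (c • w) ≤ twoSidedOrbit w := by
  refine Submodule.span_le.2 ?_
  rintro _ ⟨w₁, w₂, rfl⟩
  have hsmul : conv w₁ (conv (c • w) w₂) = c • conv w₁ (conv w w₂) := by
    simp only [conv_conv_eq_ofConv_mul, WithConv.toConv_smul, mul_smul_comm, smul_mul_assoc,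
      WithConv.ofConv_smul]
  rw [hsmul]
  exact Submodule.smul_mem _ c (Submodule.subset_span ⟨w₁, w₂, rfl⟩)

lemma twoSidedOrbit_conv_le (w u : Module.Dual K A) :
    twoSidedOrbit (conv w u) ≤ twoSidedOrbit u := by
  refine Submodule.span_le.2 ?_
  rintro _ ⟨w₁, w₂, rfl⟩
  rw [conv_assoc w u w₂, ← conv_assoc]
  exact Submodule.subset_span ⟨conv w₁ w, w₂, rfl⟩

variable (K A) in
def tildeSubmodule : Submodule K (Module.Dual K A) where
  carrier := tildeSet K A
  zero_mem' := (Submodule.finiteDimensional_of_le twoSidedOrbit_zero.le :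
    FiniteDimensional K (twoSidedOrbit (0 : Module.Dual K A)))
  add_mem' {w w'} (_ : FiniteDimensional K _) (_ : FiniteDimensional K _) :=
    Submodule.finiteDimensional_of_le (twoSidedOrbit_add_le w w')
  smul_mem' c w (_ : FiniteDimensional K _) :=
    Submodule.finiteDimensional_of_le (twoSidedOrbit_smul_le c w)

lemma conv_mem_tildeSet (w : Module.Dual K A) {u : Module.Dual K A} (hu : u ∈ tildeSet K A) :
    conv w u ∈ tildeSet K A :=
  have : FiniteDimensional K (twoSidedOrbit u) := hu
  Submodule.finiteDimensional_of_le (twoSidedOrbit_conv_le w u)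

lemma tildeDense_iff_dualCoannihilator_eq_bot :
    TildeDense K A ↔ (tildeSubmodule K A).dualCoannihilator = ⊥ := by
  simp only [Submodule.eq_bot_iff, Submodule.mem_dualCoannihilator]
  exact Iff.rfl

lemma Submodule.exists_mem_forall_apply_eq_of_dualCoannihilator_eq_bot {M : Type}
    [AddCommGroup M] [Module K M] {W : Submodule K (Module.Dual K M)}
    (hW : W.dualCoannihilator = ⊥) (C : Submodule K M) [FiniteDimensional K C]
    (w : Module.Dual K M) : ∃ u ∈ W, ∀ x ∈ C, u x = w x := by
  have hcoann : (W.map C.dualRestrict).dualCoannihilator = ⊥ := by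
    refine eq_bot_iff.2 fun x hx => ?_
    rw [Submodule.mem_dualCoannihilator] at hx
    have hx' : (x : M) ∈ W.dualCoannihilator :=
      (Submodule.mem_dualCoannihilator _).2 fun u hu => hx _ ⟨u, hu, rfl⟩
    simpa [hW] using hx'
  have htop : W.map C.dualRestrict = ⊤ := by
    rw [← Subspace.dualCoannihilator_dualAnnihilator_eq (W := W.map C.dualRestrict), hcoann,
      Submodule.dualAnnihilator_bot]
  obtain ⟨u, hu, hres⟩ : C.dualRestrict w ∈ W.map C.dualRestrict := htop ▸ Submodule.mem_top
  exact ⟨u, hu, fun x hx => LinearMap.congr_fun hres ⟨x, hx⟩⟩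

section Forward

variable {V : Type} [AddCommGroup V] [Module K V] (ρ : V →ₗ[K] V ⊗[K] A)

/-- The matrix coefficients `φ ⊗ v ↦ (φ ⊗ id)(ρ v)` of `(V, ρ)`. -/
def matrixCoeff : Module.Dual K V ⊗[K] V →ₗ[K] A :=
  TensorProduct.lift (((LinearMap.rTensorHom A).compr₂
    (TensorProduct.lid K A).toLinearMap).compl₂ ρ)

lemma apply_coact (φ : Module.Dual K V) (w : Module.Dual K A) (v : V) :
    φ (coact ρ w v) = w (matrixCoeff ρ (φ ⊗ₜ v)) := by
  rw [coact_apply]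
  change _ = w (TensorProduct.lid K A (φ.rTensor A (ρ v)))
  induction ρ v with
  | zero => simp [legMap_apply]
  | tmul x a => simp [mul_comm]
  | add x y hx hy => simp_all [legMap_apply]

lemma coact_eq_of_forall_mem_range_matrixCoeff {u w : Module.Dual K A}
    (h : ∀ a ∈ LinearMap.range (matrixCoeff ρ), u a = w a) : coact ρ u = coact ρ w := by
  ext v
  rw [← sub_eq_zero, ← Module.forall_dual_apply_eq_zero_iff K]
  intro φ
  rw [map_sub, apply_coact, apply_coact, h _ ⟨_, rfl⟩, sub_self]

lemma range_coact_eq_image_of_dualCoannihilator_eq_bot [FiniteDimensional K V]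
    {W : Submodule K (Module.Dual K A)} (hW : W.dualCoannihilator = ⊥) :
    Set.range (coact ρ) = coact ρ '' W := by
  refine (Set.image_subset_range _ _).antisymm' ?_
  rintro _ ⟨w, rfl⟩
  obtain ⟨u, hu, huw⟩ := Submodule.exists_mem_forall_apply_eq_of_dualCoannihilator_eq_bot hW
    (LinearMap.range (matrixCoeff ρ)) w
  exact ⟨u, hu, coact_eq_of_forall_mem_range_matrixCoeff ρ huw⟩

end Forward

lemma tildeDense_of_images_agree
    (h : ∀ (V : Type) [AddCommGroup V] [Module K V] [FiniteDimensional K V]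
      (ρ : V →ₗ[K] V ⊗[K] A), IsComodule ρ →
        Set.range (coact ρ) = coact ρ '' tildeSet K A) :
    TildeDense K A := by
  intro a ha
  have hstable := coaction_mem_range_rTensor_legSpan (isComodule_comul (K := K)) a
  set ρ := coactionRestrict _ _ hstable
  obtain ⟨u, hu, hu_counit⟩ : coact ρ Coalgebra.counit ∈ coact ρ '' tildeSet K A :=
    h _ ρ (isComodule_coactionRestrict _ hstable isComodule_comul) ▸ Set.mem_range_self _
  let x : legSpan (Coalgebra.comul (R := K) a) :=
    ⟨a, self_mem_legSpan_coaction isComodule_comul a⟩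
  have hua : coact (Coalgebra.comul (R := K)) u a = a :=
    calc coact (Coalgebra.comul (R := K)) u a = (coact ρ u x : A) :=
          (subtype_coact_coactionRestrict _ _ hstable u x).symm
      _ = coact ρ Coalgebra.counit x := by rw [hu_counit]
      _ = a := (subtype_coact_coactionRestrict _ _ hstable _ x).trans
          (LinearMap.congr_fun isComodule_comul.2 a)
  refine (Module.forall_dual_apply_eq_zero_iff K a).1 fun w => ?_
  calc w a = w (coact (Coalgebra.comul (R := K)) u a) := by rw [hua]
    _ = conv w u a := (conv_apply_eq_apply_coact w u a).symm
    _ = 0 := ha _ (conv_mem_tildeSet w hu)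

theorem tilde_dense_iff_images_agree :
    TildeDense K A ↔
      ∀ (V : Type) [AddCommGroup V] [Module K V] [FiniteDimensional K V]
        (ρ : V →ₗ[K] V ⊗[K] A), IsComodule ρ →
          Set.range (coact ρ) = coact ρ '' tildeSet K A :=
  ⟨fun hd _ _ _ _ ρ _ => range_coact_eq_image_of_dualCoannihilator_eq_bot ρ
    (tildeDense_iff_dualCoannihilator_eq_bot.1 hd), tildeDense_of_images_agree⟩

end
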